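/- For any nonnegative integrable h : ℝ → ℝ with ∫₀^∞ s·h(s) ds < ∞, and any a > 0 and z > 0, one has ∫₀^z ∫_z^∞ h((s-s')/a)/a ds ds' ≤ a·∫₀^∞ s·h(s) ds. -/

import Mathlib

/-!
After the substitution `u = (s - s') / a` the inner integral is `∫_{(z - s')/a}^∞ h`. Enlarging the
outer range `[0, z]` to `(-∞, z]` and swapping the integrals (Tonelli, in `ℝ≥0∞`, where the inner
integrals may be infinite), each `u ≥ 0` is counted on an `s'`-interval of length exactly `a u`.
-/

open MeasureTheory Set
open scoped ENNReal

lemma image_affine_Ici {K : Type*} [Field K] [LinearOrder K] [IsStrictOrderedRing K] {a : K}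
    (ha : 0 < a) (c t : K) : (fun u => a * u + c) '' Ici t = Ici (a * t + c) := by
  rw [show (fun u => a * u + c) = (· + c) ∘ (a * ·) from rfl, image_comp,
    image_mul_left_Ici ha, image_add_const_Ici]

theorem setIntegral_Ici_comp_sub_div (f : ℝ → ℝ) {a : ℝ} (ha : 0 < a) (c z : ℝ) :
    ∫ s in Ici z, f ((s - c) / a) / a = ∫ u in Ici ((z - c) / a), f u := by
  have himage : (fun u => a * u + c) '' Ici ((z - c) / a) = Ici z := by
    rw [image_affine_Ici ha, mul_div_cancel₀ _ ha.ne', sub_add_cancel]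
  rw [← himage, integral_image_eq_integral_abs_deriv_smul measurableSet_Ici
    (fun u _ => (((hasDerivAt_id' u).const_mul a).add_const c).hasDerivWithinAt)
    (fun u _ v _ huv => by simpa [ha.ne'] using huv)]
  refine setIntegral_congr_fun measurableSet_Ici fun u _ => ?_
  simp [abs_of_pos ha, mul_div_cancel₀ _ ha.ne', mul_div_cancel_left₀ _ ha.ne']

theorem lintegral_Iic_lintegral_Ici_sub_div {g : ℝ → ℝ≥0∞} (hg : Measurable g) {a : ℝ}
    (ha : 0 < a) (z : ℝ) :
    ∫⁻ s in Iic z, ∫⁻ u in Ici ((z - s) / a), g u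
      = ∫⁻ u in Ici 0, ENNReal.ofReal (a * u) * g u := by
  have hF : Measurable (Function.uncurry fun s u => (Ici ((z - s) / a)).indicator g u) :=
    (hg.comp measurable_snd).indicator
      (measurableSet_le ((measurable_const.sub measurable_fst).div_const a) measurable_snd)
  have hsection (u : ℝ) : ∫⁻ s in Iic z, (Ici ((z - s) / a)).indicator g u
      = ENNReal.ofReal (a * u) * g u := by
    have hiff (s : ℝ) : (z - s) / a ≤ u ↔ z - a * u ≤ s := by
      rw [div_le_iff₀ ha]; constructor <;> intro <;> linarith
    have hslice (s : ℝ) : (Ici ((z - s) / a)).indicator g u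
        = (Ici (z - a * u)).indicator (fun _ => g u) s := by
      simp only [indicator_apply, mem_Ici, hiff]
    simp_rw [hslice]
    rw [lintegral_indicator_const measurableSet_Ici, Measure.restrict_apply measurableSet_Ici,
      Ici_inter_Iic, Real.volume_Icc, sub_sub_cancel, mul_comm]
  have hsupport : (fun u => ENNReal.ofReal (a * u) * g u).support ⊆ Ici 0 :=
    Function.support_subset_iff'.2 fun u hu => by
      rw [ENNReal.ofReal_of_nonpos (mul_nonpos_of_nonneg_of_nonpos ha.le (notMem_Ici.1 hu).le),
        zero_mul]
  calc ∫⁻ s in Iic z, ∫⁻ u in Ici ((z - s) / a), g u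
      = ∫⁻ s in Iic z, ∫⁻ u, (Ici ((z - s) / a)).indicator g u := by
        simp_rw [lintegral_indicator measurableSet_Ici]
    _ = ∫⁻ u, ∫⁻ s in Iic z, (Ici ((z - s) / a)).indicator g u :=
        lintegral_lintegral_swap hF.aemeasurable
    _ = ∫⁻ u in Ici 0, ENNReal.ofReal (a * u) * g u := by
        simp_rw [hsection, setLIntegral_eq_of_support_subset hsupport]

/-- For nonnegative measurable `h : ℝ → ℝ` with `∫₀^∞ s h(s) ds < ∞`, and any `a, z > 0`,
`∫₀^z ∫_z^∞ h((s-s')/a)/a ds ds' ≤ a ∫₀^∞ s h(s) ds`. -/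
theorem tail_double_integral_bound (a z : ℝ) (ha : 0 < a) (hz : 0 < z)
    (h : ℝ → ℝ) (h_nonneg : ∀ t, 0 ≤ h t) (h_meas : Measurable h)
    (h_int : IntegrableOn (fun s => s * h s) (Set.Ici 0)) :
    (∫ s' in (0:ℝ)..z, ∫ s in Set.Ici z, h ((s - s') / a) / a)
      ≤ a * ∫ s in Set.Ici (0:ℝ), s * h s := by
  have hpos : ∀ u ∈ Ici (0:ℝ), 0 ≤ a * (u * h u) :=
    fun u hu => mul_nonneg ha.le (mul_nonneg hu (h_nonneg u))
  have hnonneg : 0 ≤ a * ∫ s in Ici (0:ℝ), s * h s := by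
    rw [← integral_const_mul]; exact setIntegral_nonneg measurableSet_Ici hpos
  have hRHS : ‖a * ∫ s in Ici (0:ℝ), s * h s‖ₑ
      = ∫⁻ u in Ici 0, ENNReal.ofReal (a * u) * ‖h u‖ₑ := by
    rw [Real.enorm_eq_ofReal hnonneg, ← integral_const_mul, ofReal_integral_eq_lintegral_ofReal
      (h_int.const_mul a) (ae_restrict_of_forall_mem measurableSet_Ici hpos)]
    refine setLIntegral_congr_fun measurableSet_Ici fun u hu => ?_
    rw [Real.enorm_eq_ofReal (h_nonneg u), ← ENNReal.ofReal_mul (mul_nonneg ha.le hu), mul_assoc]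
  have key : ‖∫ s' in (0:ℝ)..z, ∫ s in Ici z, h ((s - s') / a) / a‖ₑ
      ≤ ‖a * ∫ s in Ici (0:ℝ), s * h s‖ₑ := calc
    _ ≤ ∫⁻ s' in Ioc 0 z, ‖∫ u in Ici ((z - s') / a), h u‖ₑ := by
        rw [intervalIntegral.integral_of_le hz.le]
        simp_rw [setIntegral_Ici_comp_sub_div h ha]
        exact enorm_integral_le_lintegral_enorm _
    _ ≤ ∫⁻ s' in Iic z, ∫⁻ u in Ici ((z - s') / a), ‖h u‖ₑ :=
        (lintegral_mono fun _ => enorm_integral_le_lintegral_enorm _).trans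
          (lintegral_mono_set Ioc_subset_Iic_self)
    _ = _ := by rw [lintegral_Iic_lintegral_Ici_sub_div h_meas.enorm ha, hRHS]
  calc _ ≤ ‖∫ s' in (0:ℝ)..z, ∫ s in Ici z, h ((s - s') / a) / a‖ := Real.le_norm_self _
    _ ≤ ‖a * ∫ s in Ici (0:ℝ), s * h s‖ := enorm_le_iff_norm_le.1 key
    _ = a * ∫ s in Ici (0:ℝ), s * h s := Real.norm_of_nonneg hnonneg
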